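/- Let a > 0, β > 0, m ∈ ℕ and s ≥ 0. Then for every z > 0: (1/2)(a − βz) ∂h_a^C/∂z (z, m, s) + (1/2) z ∂²h_a^C/∂z² (z, m, s) = (m/2)(β+s) h_a^C(z, m−1, s) + (s/2)(a+m) h_a^C(z, m+1, s) − (1/2)( s(a+m) + m(β+s) ) h_a^C(z, m, s), where the first term on the right-hand side is absent when m = 0. This is the action of the one-dimensional Cox–Ingersoll–Ross generator on the gamma-type duality function, the building block of the proof of Theorem 4.1. -/

import Mathlib

/-- The gamma-type duality function `h_a^C(z, m, s)`. -/
noncomputable def hC (β a z : ℝ) (m : ℕ) (s : ℝ) : ℝ :=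
  (Real.Gamma a / Real.Gamma (a + m)) * ((β + s) / β) ^ a * (β + s) ^ m * z ^ m *
    Real.exp (-s * z)

/-!
Write `h_a^C(z, m, s) = c_m φ_m(z)` with `φ_m(z) = z^m e^{-sz}`. Since `φ_m' = m φ_{m-1} - s φ_m`
and `z φ_m = φ_{m+1}`, the generator maps `φ_m` into the span of `φ_{m-1}, φ_m, φ_{m+1}`, and the
functional equation of `Γ` gives `(a + m) c_{m+1} = (β + s) c_m`, which turns the coefficients of
`φ_{m ± 1}` into those of `h_a^C(·, m ± 1, s)`.
-/

open Real

noncomputable section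

def cirGenerator (a β : ℝ) (f : ℝ → ℝ) (z : ℝ) : ℝ :=
  1 / 2 * (a - β * z) * deriv f z + 1 / 2 * z * deriv (deriv f) z

theorem cirGenerator_const_mul (a β c : ℝ) (f : ℝ → ℝ) (z : ℝ) :
    cirGenerator a β (fun w => c * f w) z = c * cirGenerator a β f z := by
  simp only [cirGenerator, deriv_const_mul_field']
  ring

def powMulExp (s : ℝ) (m : ℕ) (w : ℝ) : ℝ :=
  w ^ m * exp (-s * w)

namespace powMulExp

variable (s : ℝ) (m : ℕ)

theorem mul_self (w : ℝ) : w * powMulExp s m w = powMulExp s (m + 1) w := by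
  simp only [powMulExp, pow_succ]
  ring

-- The factor `m` makes this hold at `m = 0` too, where `m - 1` truncates to `0`.
theorem natCast_mul_self_mul_pred (w : ℝ) :
    (m : ℝ) * (w * powMulExp s (m - 1) w) = m * powMulExp s m w := by
  cases m with
  | zero => simp
  | succ k => rw [Nat.add_sub_cancel, mul_self]

theorem hasDerivAt (w : ℝ) :
    HasDerivAt (powMulExp s m) (m * powMulExp s (m - 1) w - s * powMulExp s m w) w := by
  have hexp : HasDerivAt (fun w => exp (-s * w)) (exp (-s * w) * -s) w :=
    ((hasDerivAt_id w).const_mul (-s)).exp.congr_deriv (by simp)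
  unfold powMulExp
  exact ((hasDerivAt_pow m w).mul hexp).congr_deriv (by ring)

theorem deriv_eq :
    deriv (powMulExp s m) = fun w => m * powMulExp s (m - 1) w - s * powMulExp s m w :=
  funext fun w => (hasDerivAt s m w).deriv

theorem deriv_deriv (w : ℝ) :
    deriv (deriv (powMulExp s m)) w =
      m * (((m - 1 : ℕ) : ℝ) * powMulExp s (m - 1 - 1) w - s * powMulExp s (m - 1) w)
        - s * (m * powMulExp s (m - 1) w - s * powMulExp s m w) := by
  rw [deriv_eq]
  exact (((hasDerivAt s (m - 1) w).const_mul (m : ℝ)).sub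
    ((hasDerivAt s m w).const_mul s)).deriv

theorem cirGenerator_eq (a β z : ℝ) :
    cirGenerator a β (powMulExp s m) z =
      1 / 2 * ((m : ℝ) * (a + (m - 1 : ℕ)) * powMulExp s (m - 1) z
        - (s * (a + m) + m * (β + s)) * powMulExp s m z
        + s * (β + s) * powMulExp s (m + 1) z) := by
  have hpred := natCast_mul_self_mul_pred s m z
  have hpred2 := natCast_mul_self_mul_pred s (m - 1) z
  have hsucc := mul_self s m z
  rw [cirGenerator, deriv_deriv, deriv_eq]
  linear_combination (-(β / 2 + s)) * hpred + (m / 2 : ℝ) * hpred2 + (s * (β + s) / 2) * hsucc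

end powMulExp

def hCCoeff (β a : ℝ) (m : ℕ) (s : ℝ) : ℝ :=
  Gamma a / Gamma (a + m) * ((β + s) / β) ^ a * (β + s) ^ m

theorem hC_eq_hCCoeff_mul (β a z : ℝ) (m : ℕ) (s : ℝ) :
    hC β a z m s = hCCoeff β a m s * powMulExp s m z := by
  simp only [hC, hCCoeff, powMulExp]
  ring

theorem hCCoeff_succ (β a : ℝ) (m : ℕ) (s : ℝ) (h : a + m ≠ 0) :
    (a + m) * hCCoeff β a (m + 1) s = (β + s) * hCCoeff β a m s := by
  have hΓ : Gamma (a + (m + 1 : ℕ)) = (a + m) * Gamma (a + m) := by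
    rw [Nat.cast_succ, ← add_assoc, Gamma_add_one h]
  simp only [hCCoeff, hΓ, pow_succ]
  field_simp

theorem natCast_mul_hCCoeff_pred (β a : ℝ) (m : ℕ) (s : ℝ) (h : a + (m - 1 : ℕ) ≠ 0) :
    (m : ℝ) * ((β + s) * hCCoeff β a (m - 1) s) = m * ((a + (m - 1 : ℕ)) * hCCoeff β a m s) := by
  cases m with
  | zero => simp
  | succ k => rw [Nat.add_sub_cancel] at h ⊢; rw [hCCoeff_succ β a k s h]

end

theorem stmt10 (a : ℝ) (ha : 0 < a) (β : ℝ) (m : ℕ) (s : ℝ)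
    (z : ℝ) :
    (1 / 2) * (a - β * z) * deriv (fun w => hC β a w m s) z
      + (1 / 2) * z * deriv (deriv (fun w => hC β a w m s)) z
    = (m : ℝ) / 2 * (β + s) * hC β a z (m - 1) s
      + s / 2 * (a + m) * hC β a z (m + 1) s
      - (1 / 2) * (s * (a + m) + m * (β + s)) * hC β a z m s := by
  change cirGenerator a β (fun w => hC β a w m s) z = _
  have hpred := natCast_mul_hCCoeff_pred β a m s (by positivity)
  have hsucc := hCCoeff_succ β a m s (by positivity)
  simp only [hC_eq_hCCoeff_mul]
  rw [cirGenerator_const_mul, powMulExp.cirGenerator_eq]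
  linear_combination (-powMulExp s (m - 1) z / 2) * hpred
    - (s * powMulExp s (m + 1) z / 2) * hsucc
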